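/- Let n ≥ 0 be an integer, let r ≥ 0, and let λ be a nonzero real number. Then lim_{t↓0} e^{−λ²/(4t)} · (∂ⁿ/∂rⁿ)[Q₂(t, cos(√t·r)·cosh λ)] = (λ/sinh λ) · (∂ⁿ/∂rⁿ) e^{−r²·λ·coth(λ)/4}. (Note that for t sufficiently small, cos(√t·r)·cosh λ > 1, so the expression is defined.) -/

import Mathlib

open Real Filter Set Topology

noncomputable section

/-- Inverse hyperbolic cosine on `[1, ∞)`. -/
def arccosh (x : ℝ) : ℝ := Real.log (x + Real.sqrt (x ^ 2 - 1))

/-- `Q₂(t,x) = (arccosh x/√(x²−1))·exp((arccosh x)²/(4t))`, for `x > 1`. -/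
def Q2 (t x : ℝ) : ℝ :=
  (arccosh x / Real.sqrt (x ^ 2 - 1)) * Real.exp ((arccosh x) ^ 2 / (4 * t))

/-!
Put `a(u) = arcosh (cos u · cosh λ)`, so `a(0) = |λ|` and `√(x² - 1) = sinh (arcosh x)`.
Since `a²` is even and analytic, `a(u)² = λ² + u² B(u)` with `B` analytic at `0`, and then
`e^{-λ²/(4t)} Q₂(t, cos(√t y) cosh λ) = F(√t, y)` where
`F(s, y) = (a / sinh a)(s y) · e^{y² B(s y)/4}` is smooth near `s = 0`. So `∂ⁿ_y F(s, r)` is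
continuous in `s`, and at `s = 0` it is the `n`-th derivative of `(λ / sinh λ) e^{y² B(0)/4}`.
Finally `B(0) = -λ coth λ` comes from `cosh a(u) - cosh λ = cosh λ (cos u - 1)` after dividing
by `u²` and letting `u → 0`.
-/

section

variable {𝕜 E F : Type*} [NontriviallyNormedField 𝕜]
  [NormedAddCommGroup E] [NormedSpace 𝕜 E] [NormedAddCommGroup F] [NormedSpace 𝕜 F]

theorem AnalyticAt.dslope_self {f : 𝕜 → F} {a : 𝕜} (hf : AnalyticAt 𝕜 f a) :
    AnalyticAt 𝕜 (dslope f a) a :=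
  let ⟨_, hp⟩ := hf
  hp.has_fpower_series_dslope_fslope.analyticAt

theorem sq_smul_dslope_dslope (f : 𝕜 → F) (a b : 𝕜) :
    (b - a) ^ 2 • dslope (dslope f a) a b = f b - f a - (b - a) • deriv f a := by
  rw [sq, mul_smul, sub_smul_dslope, smul_sub, sub_smul_dslope, dslope_same]

theorem Function.Even.deriv_zero [CharZero 𝕜] {f : 𝕜 → F} (hf : Function.Even f) :
    deriv f 0 = 0 := by
  have h := deriv_comp_neg (f := f) (x := 0)
  simp only [hf.eq, neg_zero] at h
  have h2 : (2 : 𝕜) • deriv f 0 = 0 := by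
    rw [two_smul]; nth_rewrite 1 [h]; exact neg_add_cancel _
  exact (smul_eq_zero.mp h2).resolve_left two_ne_zero

theorem ContDiffAt.iteratedDeriv_right {f : E → 𝕜 → F} {p : E × 𝕜}
    (hf : ContDiffAt 𝕜 ⊤ (Function.uncurry f) p) (n : ℕ) :
    ContDiffAt 𝕜 ⊤ (fun q : E × 𝕜 => iteratedDeriv n (f q.1) q.2) p := by
  induction n with
  | zero => exact hf
  | succ n ih =>
    simp only [iteratedDeriv_succ, ← fderiv_apply_one_eq_deriv]
    refine (ContDiffAt.fderiv (f := fun q : E × 𝕜 => iteratedDeriv n (f q.1)) ?_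
      contDiffAt_snd le_top).clm_apply contDiffAt_const
    exact ContDiffAt.comp (g := fun q : E × 𝕜 => iteratedDeriv n (f q.1) q.2) (p, p.2) ih
      (contDiffAt_fst.fst.prodMk contDiffAt_snd)

end

lemma tendsto_sqrt_nhdsGT_zero : Tendsto (√·) (𝓝[>] 0) (𝓝 0) :=
  (continuous_sqrt.tendsto' 0 0 sqrt_zero).mono_left nhdsWithin_le_nhds

def arcoshCos (lam u : ℝ) : ℝ := arcosh (cos u * cosh lam)

def arcoshCosSqQuot (lam : ℝ) : ℝ → ℝ := dslope (dslope (fun u => arcoshCos lam u ^ 2) 0) 0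

def rescaledQ2 (lam : ℝ) (p : ℝ × ℝ) : ℝ :=
  arcoshCos lam (p.1 * p.2) / sinh (arcoshCos lam (p.1 * p.2)) *
    exp (p.2 ^ 2 * arcoshCosSqQuot lam (p.1 * p.2) / 4)

lemma abs_div_sinh_abs (x : ℝ) : |x| / sinh |x| = x / sinh x := by
  rcases abs_choice x with h | h <;> rw [h]
  rw [sinh_neg, neg_div_neg_eq]

lemma cos_sub_one_eq_neg_mul_sinc_sq (u : ℝ) :
    cos u - 1 = -(u ^ 2 / 2) * sinc (u / 2) ^ 2 := by
  rcases eq_or_ne u 0 with rfl | hu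
  · simp
  rw [sinc_of_ne_zero (div_ne_zero hu two_ne_zero), ← mul_div_cancel₀ u (two_ne_zero' ℝ),
    cos_two_mul, cos_sq']
  field_simp
  ring

section

variable {lam : ℝ}

lemma eventually_one_lt_cos_mul_cosh (hlam : lam ≠ 0) :
    ∀ᶠ u in 𝓝 0, 1 < cos u * cosh lam :=
  continuousAt_const.eventually_lt (continuous_cos.mul continuous_const).continuousAt
    (by simpa using one_lt_cosh.2 hlam)

lemma arcoshCos_zero (lam : ℝ) : arcoshCos lam 0 = |lam| := by
  rw [arcoshCos, cos_zero, one_mul, ← cosh_abs, arcosh_cosh (abs_nonneg lam)]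

lemma analyticAt_arcoshCos (hlam : lam ≠ 0) : AnalyticAt ℝ (arcoshCos lam) 0 :=
  (analyticAt_arcosh (by simpa using one_lt_cosh.2 hlam)).comp
    (analyticAt_cos.mul analyticAt_const)

lemma analyticAt_arcoshCosSqQuot (hlam : lam ≠ 0) : AnalyticAt ℝ (arcoshCosSqQuot lam) 0 :=
  ((analyticAt_arcoshCos hlam).pow 2).dslope_self.dslope_self

lemma sq_mul_arcoshCosSqQuot (lam u : ℝ) :
    u ^ 2 * arcoshCosSqQuot lam u = arcoshCos lam u ^ 2 - lam ^ 2 := by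
  have heven : Function.Even (fun u => arcoshCos lam u ^ 2) := fun u => by simp [arcoshCos]
  have h := sq_smul_dslope_dslope (fun u => arcoshCos lam u ^ 2) 0 u
  rw [heven.deriv_zero, arcoshCos_zero, sq_abs] at h
  simpa [arcoshCosSqQuot] using h

lemma arcoshCosSqQuot_zero (hlam : lam ≠ 0) :
    arcoshCosSqQuot lam 0 = -(lam * (cosh lam / sinh lam)) := by
  -- `u² G(u) = 0` near `0` because `cosh a(u) - cosh |λ| = cosh λ (cos u - 1)`; at `u = 0`,
  -- continuity turns `G 0 = 0` into `B(0) sinh |λ| = -|λ| cosh λ`.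
  set G : ℝ → ℝ := fun u => arcoshCosSqQuot lam u * dslope cosh |lam| (arcoshCos lam u) +
    sinc (u / 2) ^ 2 / 2 * cosh lam * (arcoshCos lam u + |lam|)
  have hG : ContinuousAt G 0 := by
    have ha := (analyticAt_arcoshCos hlam).continuousAt
    have hd : ContinuousAt (fun u => dslope cosh |lam| (arcoshCos lam u)) 0 :=
      (continuousAt_dslope_same.2 (differentiable_cosh _)).comp_of_eq ha (arcoshCos_zero lam)
    have hB := (analyticAt_arcoshCosSqQuot hlam).continuousAt
    have hs : ContinuousAt (fun u => sinc (u / 2)) 0 := by fun_prop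
    exact (hB.mul hd).add ((((hs.pow 2).div_const 2).mul continuousAt_const).mul
      (ha.add continuousAt_const))
  have hG_eq : ∀ᶠ u in 𝓝[≠] 0, G u = 0 := by
    filter_upwards [eventually_nhdsWithin_of_eventually_nhds (eventually_one_lt_cos_mul_cosh hlam),
      self_mem_nhdsWithin] with u hu hu0
    have hcosh : (arcoshCos lam u - |lam|) * dslope cosh |lam| (arcoshCos lam u) =
        cosh lam * (cos u - 1) := by
      rw [← smul_eq_mul, sub_smul_dslope, cosh_abs, arcoshCos, cosh_arcosh hu.le]
      ring
    have hsq := sq_mul_arcoshCosSqQuot lam u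
    rw [← sq_abs lam] at hsq
    have : u ^ 2 * G u = 0 := by
      linear_combination dslope cosh |lam| (arcoshCos lam u) * hsq +
        (arcoshCos lam u + |lam|) * hcosh +
        (arcoshCos lam u + |lam|) * cosh lam * cos_sub_one_eq_neg_mul_sinc_sq u
    exact (mul_eq_zero.1 this).resolve_left (pow_ne_zero 2 hu0)
  have hG0 : G 0 = 0 := tendsto_nhds_unique (hG.tendsto.mono_left nhdsWithin_le_nhds)
    (tendsto_const_nhds.congr' (hG_eq.mono fun _ h => h.symm))
  simp only [G, arcoshCos_zero, dslope_same, Real.deriv_cosh, zero_div, sinc_zero] at hG0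
  have hs : sinh |lam| ≠ 0 := (sinh_pos_iff.2 (abs_pos.2 hlam)).ne'
  have : arcoshCosSqQuot lam 0 = -(|lam| / sinh |lam| * cosh lam) := by
    field_simp
    linarith
  rw [this, abs_div_sinh_abs]
  ring

lemma rescaledQ2_zero_left (hlam : lam ≠ 0) (y : ℝ) :
    rescaledQ2 lam (0, y) =
      lam / sinh lam * exp (-(y ^ 2 * lam * (cosh lam / sinh lam)) / 4) := by
  rw [rescaledQ2, zero_mul, arcoshCos_zero, abs_div_sinh_abs, arcoshCosSqQuot_zero hlam]
  ring_nf

lemma contDiffAt_rescaledQ2 (hlam : lam ≠ 0) (r : ℝ) :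
    ContDiffAt ℝ ⊤ (rescaledQ2 lam) (0, r) := by
  have hu : AnalyticAt ℝ (fun p : ℝ × ℝ => p.1 * p.2) (0, r) :=
    analyticAt_fst.mul analyticAt_snd
  have ha := (analyticAt_arcoshCos hlam).comp_of_eq hu (zero_mul r)
  have hB := (analyticAt_arcoshCosSqQuot hlam).comp_of_eq hu (zero_mul r)
  have hsinh : sinh (arcoshCos lam ((0 : ℝ) * r)) ≠ 0 := by
    rw [zero_mul, arcoshCos_zero]
    exact (sinh_pos_iff.2 (abs_pos.2 hlam)).ne'
  exact ((ha.div (analyticAt_sinh.comp ha) hsinh).mul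
    (analyticAt_rexp.comp (((analyticAt_snd.pow 2).mul hB).div_const (c := 4)))).contDiffAt

lemma exp_mul_Q2_eq_rescaledQ2 {t y : ℝ} (ht : 0 < t) (hy : 1 ≤ cos (√t * y) * cosh lam) :
    exp (-lam ^ 2 / (4 * t)) * Q2 t (cos (√t * y) * cosh lam) = rescaledQ2 lam (√t, y) := by
  have hexp : -lam ^ 2 / (4 * t) + arcoshCos lam (√t * y) ^ 2 / (4 * t) =
      y ^ 2 * arcoshCosSqQuot lam (√t * y) / 4 := by
    have h := sq_mul_arcoshCosSqQuot lam (√t * y)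
    rw [mul_pow, sq_sqrt ht.le] at h
    field_simp
    linarith
  rw [Q2, ← sinh_arcosh hy, rescaledQ2, ← hexp, exp_add]
  simp only [arcoshCos, arccosh, arcosh]
  ring

lemma eventually_eventuallyEq_rescaledQ2 (hlam : lam ≠ 0) (r : ℝ) :
    ∀ᶠ t in 𝓝[>] 0,
      (fun y => exp (-lam ^ 2 / (4 * t)) * Q2 t (cos (√t * y) * cosh lam)) =ᶠ[𝓝 r]
        fun y => rescaledQ2 lam (√t, y) := by
  have hprod : ∀ᶠ p in 𝓝 (0, r), 1 < cos (p.1 * p.2) * cosh lam :=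
    ((continuous_fst.mul continuous_snd).tendsto' ((0 : ℝ), r) 0 (zero_mul r)).eventually
      (eventually_one_lt_cos_mul_cosh hlam)
  rw [nhds_prod_eq] at hprod
  filter_upwards [tendsto_sqrt_nhdsGT_zero.eventually hprod.curry, self_mem_nhdsWithin]
    with t ht ht0
  filter_upwards [ht] with y hy
  exact exp_mul_Q2_eq_rescaledQ2 ht0 hy.le

end

theorem statement5_general (n : ℕ) (r lam : ℝ) (hlam : lam ≠ 0) :
    Tendsto
      (fun t : ℝ => Real.exp (-lam ^ 2 / (4 * t)) *
        iteratedDeriv n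
          (fun r : ℝ => Q2 t (Real.cos (Real.sqrt t * r) * Real.cosh lam)) r)
      (nhdsWithin 0 (Set.Ioi 0))
      (nhds ((lam / Real.sinh lam) *
        iteratedDeriv n
          (fun r : ℝ =>
            Real.exp (-(r ^ 2 * lam * (Real.cosh lam / Real.sinh lam)) / 4)) r)) := by
  set D : ℝ × ℝ → ℝ := fun q => iteratedDeriv n (fun y => rescaledQ2 lam (q.1, y)) q.2
  have hD : ContinuousAt D (0, r) :=
    (ContDiffAt.iteratedDeriv_right (f := fun s y => rescaledQ2 lam (s, y))
      (contDiffAt_rescaledQ2 hlam r) n).continuousAt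
  have hlim : Tendsto (fun t => D (√t, r)) (𝓝[>] 0) (𝓝 (D (0, r))) :=
    hD.tendsto.comp (tendsto_sqrt_nhdsGT_zero.prodMk_nhds tendsto_const_nhds)
  have hD0 : D (0, r) = lam / sinh lam *
      iteratedDeriv n (fun y => exp (-(y ^ 2 * lam * (cosh lam / sinh lam)) / 4)) r := by
    simp only [D, rescaledQ2_zero_left hlam, iteratedDeriv_const_mul_field]
  rw [hD0] at hlim
  refine hlim.congr' ?_
  filter_upwards [eventually_eventuallyEq_rescaledQ2 hlam r] with t ht
  rw [← iteratedDeriv_const_mul_field, ht.iteratedDeriv_eq]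

/-- Proposition `p.drq`: for `n ≥ 0`, `r ≥ 0`, `λ ≠ 0`,
`lim_{t↓0} e^{−λ²/(4t)} ∂ⁿ/∂rⁿ [Q₂(t, cos(√t r)·cosh λ)]
  = (λ/sinh λ) ∂ⁿ/∂rⁿ e^{−r²λ coth λ/4}`. -/
theorem statement5 (n : ℕ) (r lam : ℝ) (hr : 0 ≤ r) (hlam : lam ≠ 0) :
    Tendsto
      (fun t : ℝ => Real.exp (-lam ^ 2 / (4 * t)) *
        iteratedDeriv n
          (fun r : ℝ => Q2 t (Real.cos (Real.sqrt t * r) * Real.cosh lam)) r)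
      (nhdsWithin 0 (Set.Ioi 0))
      (nhds ((lam / Real.sinh lam) *
        iteratedDeriv n
          (fun r : ℝ =>
            Real.exp (-(r ^ 2 * lam * (Real.cosh lam / Real.sinh lam)) / 4)) r)) :=
  statement5_general n r lam hlam
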